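/- arXiv:2411.01194 — 2 statements merged into one kernel-verified Lean document; each statement's English description precedes it below -/
import Mathlib

section
/- Let N be a positive integer, B > 0 a real number, and for i = 1,…,N let R_i ≥ 0 and a_i be real numbers; set a_0 = 0. Define powers p_1,…,p_N recursively by p_i = (2^{R_i/B} − 1)·(Σ_{k<i} p_k + a_i), where the empty sum is 0. Then the total power satisfies the closed-form telescoping identity Σ_{i=1}^N p_i = Σ_{i=1}^N (a_i − a_{i−1})·2^{(Σ_{k=i}^N R_k)/B} − a_N. (This converts the on-board power constraint Σ p_i ≤ Pₛ into the exponential-cone constraint (27) of the A-eNOMA-BF algorithm.) -/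
theorem stmt_6 (N : ℕ) (hN : 0 < N) (B : ℝ) (hB : 0 < B)
    (R a p : ℕ → ℝ)
    (hR : ∀ i, 1 ≤ i → i ≤ N → 0 ≤ R i)
    (ha0 : a 0 = 0)
    (hp : ∀ i, 1 ≤ i → i ≤ N →
      p i = ((2 : ℝ) ^ (R i / B) - 1) * ((∑ k ∈ Finset.Ico 1 i, p k) + a i)) :
    ∑ i ∈ Finset.Icc 1 N, p i =
      (∑ i ∈ Finset.Icc 1 N,
        (a i - a (i - 1)) * (2 : ℝ) ^ ((∑ k ∈ Finset.Icc i N, R k) / B)) - a N := by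
  have key : ∀ n, n ≤ N → (∑ k ∈ Finset.Icc 1 n, p k) + a n
      = ∑ i ∈ Finset.Icc 1 n,
          (a i - a (i - 1)) * (2 : ℝ) ^ ((∑ k ∈ Finset.Icc i n, R k) / B) := by
    intro n
    induction n with
    | zero => simp [ha0]
    | succ m ih =>
      intro hn
      have hm : m ≤ N := Nat.le_of_succ_le hn
      have hIH := ih hm
      have hps := hp (m + 1) (Nat.succ_le_succ (Nat.zero_le m)) hn
      rw [Finset.Ico_add_one_right_eq_Icc] at hps
      set E : ℝ := (2 : ℝ) ^ (R (m + 1) / B) with hE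
      have hsplit : ∀ i ∈ Finset.Icc 1 m,
          (a i - a (i - 1)) * (2 : ℝ) ^ ((∑ k ∈ Finset.Icc i (m + 1), R k) / B)
          = ((a i - a (i - 1)) * (2 : ℝ) ^ ((∑ k ∈ Finset.Icc i m, R k) / B)) * E := by
        intro i hi
        have hiM : i ≤ m + 1 := le_trans (Finset.mem_Icc.mp hi).2 (Nat.le_succ m)
        rw [Finset.sum_Icc_succ_top hiM, add_div, Real.rpow_add (by norm_num)]
        ring
      have h1 : (1 : ℕ) ≤ m + 1 := Nat.succ_le_succ (Nat.zero_le m)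
      rw [Finset.sum_Icc_succ_top h1, Finset.sum_Icc_succ_top h1,
        Finset.sum_congr rfl hsplit, ← Finset.sum_mul, ← hIH, hps]
      have : m + 1 - 1 = m := rfl
      rw [this, Finset.Icc_self, Finset.sum_singleton]
      ring
  have h := key N le_rfl
  linarith
end

section
/- Let N be a positive integer, B > 0 a real number, and for i = 1,…,N let R_i ≥ 0 and a_i > 0 be real numbers with a_0 = 0 and a_i ≥ a_{i−1} for all i (effective noise levels ordered consistently with decreasing channel gains ‖h_1‖² > … > ‖h_N‖²). Define p_i = (2^{R_i/B} − 1)·(Σ_{k<i} p_k + a_i). Then for any real Pₛ, the power constraint Σ_{i=1}^N p_i ≤ Pₛ holds if and only if Σ_{i=1}^N (a_i − a_{i−1})·2^{(Σ_{k=i}^N R_k)/B} − a_N ≤ Pₛ, and in this constraint every coefficient a_i − a_{i−1} is nonnegative, so the left-hand side is a nonnegative combination of the exponential terms 2^{(Σ_{k=i}^N R_k)/B}. (This establishes that constraint (27) is an equivalent exponential-cone reformulation of the on-board power budget (7)–(8) in the variables R_1,…,R_N.) -/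
theorem stmt_9 (N : ℕ) (hN : 0 < N) (B : ℝ) (hB : 0 < B)
    (R a p : ℕ → ℝ)
    (hR : ∀ i, 1 ≤ i → i ≤ N → 0 ≤ R i)
    (ha0 : a 0 = 0)
    (ha : ∀ i, 1 ≤ i → i ≤ N → 0 < a i)
    (hmono : ∀ i, 1 ≤ i → i ≤ N → a (i - 1) ≤ a i)
    (hp : ∀ i, 1 ≤ i → i ≤ N →
      p i = ((2 : ℝ) ^ (R i / B) - 1) * ((∑ k ∈ Finset.Ico 1 i, p k) + a i)) :
    (∀ Ps : ℝ,
      (∑ i ∈ Finset.Icc 1 N, p i ≤ Ps ↔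
        (∑ i ∈ Finset.Icc 1 N,
          (a i - a (i - 1)) * (2 : ℝ) ^ ((∑ k ∈ Finset.Icc i N, R k) / B)) - a N ≤ Ps)) ∧
    (∀ i, 1 ≤ i → i ≤ N → 0 ≤ a i - a (i - 1)) := by
  have key : ∀ n, n ≤ N →
      (∑ i ∈ Finset.Icc 1 n, p i) + a n =
        ∑ i ∈ Finset.Icc 1 n,
          (a i - a (i - 1)) * (2 : ℝ) ^ ((∑ k ∈ Finset.Icc i n, R k) / B) := by
    intro n
    induction n with
    | zero => intro _; simp [ha0]
    | succ n ih =>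
      intro hn
      have hn' : n ≤ N := Nat.le_of_succ_le hn
      have h1 : 1 ≤ n + 1 := Nat.succ_le_succ (Nat.zero_le n)
      have hpn := hp (n + 1) h1 hn
      rw [Finset.Ico_add_one_right_eq_Icc] at hpn
      set c : ℝ := (2 : ℝ) ^ (R (n + 1) / B) with hc
      have hS : (∑ i ∈ Finset.Icc 1 (n + 1), p i) = (∑ i ∈ Finset.Icc 1 n, p i) + p (n + 1) :=
        Finset.sum_Icc_succ_top h1 p
      have lhs_eq : (∑ i ∈ Finset.Icc 1 (n + 1), p i) + a (n + 1) =
          c * ((∑ i ∈ Finset.Icc 1 n, p i) + a n) + c * (a (n + 1) - a n) := by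
        rw [hS, hpn]; ring
      rw [lhs_eq, ih hn']
      rw [Finset.sum_Icc_succ_top h1]
      have hlast : Finset.Icc (n + 1) (n + 1) = {n + 1} := Finset.Icc_self (n + 1)
      rw [hlast]
      simp only [Finset.sum_singleton, Nat.add_sub_cancel]
      rw [Finset.mul_sum]
      congr 1
      · apply Finset.sum_congr rfl
        intro i hi
        have hi' : i ≤ n := (Finset.mem_Icc.mp hi).2
        have hsum : (∑ k ∈ Finset.Icc i (n + 1), R k) = (∑ k ∈ Finset.Icc i n, R k) + R (n + 1) :=
          Finset.sum_Icc_succ_top (Nat.le_succ_of_le hi') R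
        rw [hsum, add_div, Real.rpow_add two_pos]
        ring
      · ring
  have hnonneg : ∀ i, 1 ≤ i → i ≤ N → 0 ≤ a i - a (i - 1) := fun i h1 h2 =>
    sub_nonneg.mpr (hmono i h1 h2)
  refine ⟨fun Ps => ?_, hnonneg⟩
  have := key N le_rfl
  constructor
  · intro h; linarith
  · intro h; linarith
end
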